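/- For every R ∈ SO(3) and every ω ∈ ℝ³, ψ(R[ω]×) = (1/2)(tr(R)·I − Rᵀ)ω; i.e. the directional variation of ψ along the attitude flow Ṙ = R[ω]× is given by E(R)ᵀω with E(R) = (1/2)(tr(R)·I − R). -/

import Mathlib

open Matrix

/-- `R ∈ SO(3)`: `R Rᵀ = I` and `det R = 1`. -/
def IsSO3 (R : Matrix (Fin 3) (Fin 3) ℝ) : Prop := R * Rᵀ = 1 ∧ R.det = 1

/-- The skew-symmetric matrix `[x]×` with `[x]× y = x × y`. -/
def skew (x : Fin 3 → ℝ) : Matrix (Fin 3) (Fin 3) ℝ :=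
  !![0, -x 2, x 1; x 2, 0, -x 0; -x 1, x 0, 0]

/-- `ψ(A) = vex(P_a(A))` where `P_a(A) = (A - Aᵀ)/2`. -/
noncomputable def psi (A : Matrix (Fin 3) (Fin 3) ℝ) : Fin 3 → ℝ :=
  ![(A 2 1 - A 1 2)/2, (A 0 2 - A 2 0)/2, (A 1 0 - A 0 1)/2]

/-- `E(R) = (1/2)(tr(R)·I - R)`. -/
noncomputable def eMat (R : Matrix (Fin 3) (Fin 3) ℝ) : Matrix (Fin 3) (Fin 3) ℝ :=
  (1/2 : ℝ) • (Matrix.trace R • (1 : Matrix (Fin 3) (Fin 3) ℝ) - R)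

theorem psi_mul_skew (A : Matrix (Fin 3) (Fin 3) ℝ) (ω : Fin 3 → ℝ) :
    psi (A * skew ω) = ((1/2 : ℝ) • (trace A • (1 : Matrix (Fin 3) (Fin 3) ℝ) - Aᵀ)) *ᵥ ω := by
  funext i
  fin_cases i <;>
    simp [psi, skew, mulVec, dotProduct, mul_apply, trace, Fin.sum_univ_three, one_apply] <;>
    ring

theorem eMat_transpose (R : Matrix (Fin 3) (Fin 3) ℝ) :
    (eMat R)ᵀ = (1/2 : ℝ) • (trace R • (1 : Matrix (Fin 3) (Fin 3) ℝ) - Rᵀ) := by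
  simp only [eMat, one_div, transpose_smul, transpose_sub, transpose_one]

theorem stmt8 (R : Matrix (Fin 3) (Fin 3) ℝ) (ω : Fin 3 → ℝ) :
    psi (R * skew ω) =
      ((1/2 : ℝ) • (Matrix.trace R • (1 : Matrix (Fin 3) (Fin 3) ℝ) - Rᵀ)).mulVec ω ∧
    psi (R * skew ω) = (eMat R)ᵀ.mulVec ω := by
  rw [eMat_transpose]
  exact ⟨psi_mul_skew R ω, psi_mul_skew R ω⟩
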